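/- arXiv:2107.10635 — 2 statements merged into one kernel-verified Lean document; each statement's English description precedes it below -/
import Mathlib

section
/- If γ:[0,1]→(0,1) is piecewise constant with values α₁<α₂<...<α_{n+1} on the intervals [r₀,r₁), [r₁,r₂), ..., [r_{n−1},r_n), [r_n, r_{n+1}] where 0=r₀<r₁<...<r_n<r_{n+1}=1, then for all random variables X, Y with Y ≥ 0 almost surely, RecVaR_γ(X,Y) = max over i=1,...,n+1 of VaR_{α_i}(X + (1−r_i)Y). -/
/-!
On `[r_{i-1}, r_i)` the level `γ λ = α_i` is constant, and since `Y ≥ 0` the position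
`X + (1 - λ) Y` decreases in `λ`, so `λ ↦ VaR_{α_i}(X + (1 - λ) Y)` is nondecreasing there:
the supremum over the piece is bounded by the value at its right end `r_i`. Conversely this
value is attained as `λ ↑ r_i`, because `VaR` is lower semicontinuous under a.e. convergence:
the strict-inequality events `{Z_k + x < 0}` eventually contain every point of `{Z + x < 0}`,
so continuity of the measure from below transfers the bound `≤ α` to the limit.
-/

open MeasureTheory

variable {Ω : Type*} [MeasurableSpace Ω]

/-- Value at Risk at level `α`, valued in the extended reals:
`VaR_α(X) = inf { x : ℝ | P(X + x < 0) ≤ α }`. -/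
noncomputable def VaR (μ : Measure Ω) (α : ℝ) (X : Ω → ℝ) : EReal :=
  sInf {y : EReal | ∃ x : ℝ, y = (x : EReal) ∧ μ {ω | X ω + x < 0} ≤ ENNReal.ofReal α}

/-- Recovery Value at Risk with level function `γ`:
`RecVaR_γ(X,Y) = sup_{λ ∈ [0,1]} VaR_{γ(λ)}(X + (1-λ)Y)`. -/
noncomputable def RecVaR (μ : Measure Ω) (γ : ℝ → ℝ) (X Y : Ω → ℝ) : EReal :=
  ⨆ l : Set.Icc (0:ℝ) 1, VaR μ (γ l) (fun ω => X ω + (1 - (l : ℝ)) * Y ω)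

/-- Average Value at Risk at level `α`:
`AVaR_α(X) = (1/α) ∫_0^α VaR_β(X) dβ`. -/
noncomputable def AVaR (μ : Measure Ω) (α : ℝ) (X : Ω → ℝ) : ℝ :=
  (1 / α) * ∫ β in (0:ℝ)..α, (VaR μ β X).toReal

/-- Recovery Average Value at Risk with level function `γ`:
`RecAVaR_γ(X,Y) = sup_{λ ∈ [0,1]} AVaR_{γ(λ)}(X + (1-λ)Y)`. -/
noncomputable def RecAVaR (μ : Measure Ω) (γ : ℝ → ℝ) (X Y : Ω → ℝ) : EReal :=
  ⨆ l : Set.Icc (0:ℝ) 1, ((AVaR μ (γ l) (fun ω => X ω + (1 - (l : ℝ)) * Y ω) : ℝ) : EReal)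

open Filter Topology

section VaR

variable (μ : Measure Ω) (α : ℝ)

lemma VaR_le_coe {Z : Ω → ℝ} {x : ℝ} (h : μ {ω | Z ω + x < 0} ≤ ENNReal.ofReal α) :
    VaR μ α Z ≤ x :=
  sInf_le ⟨x, rfl, h⟩

lemma measure_le_of_VaR_lt_coe {Z : Ω → ℝ} {x : ℝ} (h : VaR μ α Z < x) :
    μ {ω | Z ω + x < 0} ≤ ENNReal.ofReal α := by
  obtain ⟨-, ⟨y, rfl, hy⟩, hyx⟩ := sInf_lt_iff.mp h
  have hyx : y < x := EReal.coe_lt_coe_iff.mp hyx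
  exact (measure_mono fun ω (hω : Z ω + x < 0) => show Z ω + y < 0 by linarith).trans hy

lemma VaR_le_VaR_of_ae_le {Z₁ Z₂ : Ω → ℝ} (h : ∀ᵐ ω ∂μ, Z₂ ω ≤ Z₁ ω) :
    VaR μ α Z₁ ≤ VaR μ α Z₂ := by
  refine sInf_le_sInf ?_
  rintro - ⟨x, rfl, hx⟩
  refine ⟨x, rfl, (measure_mono_ae ?_).trans hx⟩
  filter_upwards [h] with ω hω (hneg : Z₁ ω + x < 0)
  show Z₂ ω + x < 0
  linarith

lemma VaR_le_of_tendsto {Z : ℕ → Ω → ℝ} {Z' : Ω → ℝ}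
    (hZ : ∀ᵐ ω ∂μ, Tendsto (fun k => Z k ω) atTop (𝓝 (Z' ω))) {v : EReal}
    (h : ∀ k, VaR μ α (Z k) ≤ v) : VaR μ α Z' ≤ v := by
  by_contra! hlt
  obtain ⟨x, hvx, hxV⟩ := EReal.exists_between_coe_real hlt
  refine hxV.not_ge (VaR_le_coe μ α ?_)
  -- `{Z' + x < 0}` lies a.e. in the lower limit of the sets `{Z k + x < 0}`
  set t : ℕ → Set Ω := fun N => {ω | ∀ k ≥ N, Z k ω + x < 0}
  have ht : Monotone t := fun N M hNM ω hω k hk => hω k (hNM.trans hk)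
  calc μ {ω | Z' ω + x < 0} ≤ μ (⋃ N, t N) := by
        refine measure_mono_ae (hZ.mono fun ω hω (hneg : Z' ω + x < 0) => ?_)
        obtain ⟨N, hN⟩ := eventually_atTop.mp (hω.eventually_lt_const (by linarith : Z' ω < -x))
        exact Set.mem_iUnion.mpr ⟨N, fun k hk => by linarith [hN k hk]⟩
    _ = ⨆ N, μ (t N) := ht.measure_iUnion
    _ ≤ ENNReal.ofReal α := iSup_le fun N =>
        (measure_mono fun ω (hω : ∀ k ≥ N, Z k ω + x < 0) => hω N le_rfl).trans
          (measure_le_of_VaR_lt_coe μ α ((h N).trans_lt hvx))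

variable (X Y : Ω → ℝ)

lemma monotone_VaR_add_one_sub_mul (hY : ∀ᵐ ω ∂μ, 0 ≤ Y ω) :
    Monotone fun l : ℝ => VaR μ α (fun ω => X ω + (1 - l) * Y ω) :=
  fun _ _ hll' => VaR_le_VaR_of_ae_le μ α (hY.mono fun _ hω => by nlinarith)

lemma VaR_add_one_sub_mul_le_of_forall_Ioo {b c : ℝ} (hbc : b < c) {v : EReal}
    (h : ∀ l ∈ Set.Ioo b c, VaR μ α (fun ω => X ω + (1 - l) * Y ω) ≤ v) :
    VaR μ α (fun ω => X ω + (1 - c) * Y ω) ≤ v := by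
  obtain ⟨u, -, hu, hlim⟩ := exists_seq_strictMono_tendsto' hbc
  refine VaR_le_of_tendsto μ α (ae_of_all _ fun ω => ?_) fun k => h _ (hu k)
  exact tendsto_const_nhds.add ((tendsto_const_nhds.sub hlim).mul_const _)

end VaR

lemma Fin.exists_castSucc_le_and_lt_succ {β : Type*} [LinearOrder β] {m : ℕ}
    (r : Fin (m + 1) → β) {x : β} (h0 : r 0 ≤ x) (h1 : x < r (Fin.last m)) :
    ∃ i : Fin m, r i.castSucc ≤ x ∧ x < r i.succ := by
  induction m with
  | zero => exact absurd h1 (not_lt.2 h0)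
  | succ m ih =>
    by_cases hx : x < r (Fin.last m).castSucc
    · obtain ⟨i, hi⟩ := ih (r ∘ Fin.castSucc) h0 hx
      exact ⟨i.castSucc, by rw [Fin.succ_castSucc]; exact hi⟩
    · exact ⟨Fin.last m, not_lt.1 hx, by rwa [Fin.succ_last]⟩

theorem recVaR_piecewise_constant_general (μ : Measure Ω)
    (n : ℕ) (r : Fin (n + 2) → ℝ) (a : Fin (n + 1) → ℝ)
    (hr : StrictMono r) (hr0 : r 0 = 0) (hr1 : r (Fin.last (n + 1)) = 1)
    (γ : ℝ → ℝ)
    (hγ : ∀ (i : Fin (n + 1)) (l : ℝ), r i.castSucc ≤ l → l < r i.succ → γ l = a i)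
    (hγ1 : γ 1 = a (Fin.last n))
    (X Y : Ω → ℝ)
    (hY0 : ∀ᵐ ω ∂μ, 0 ≤ Y ω) :
    RecVaR μ γ X Y =
      ⨆ i : Fin (n + 1), VaR μ (a i) (fun ω => X ω + (1 - r i.succ) * Y ω) := by
  apply le_antisymm
  · refine iSup_le fun ⟨l, hl0, hl1⟩ => ?_
    obtain ⟨i, hγl, hli⟩ : ∃ i, γ l = a i ∧ l ≤ r i.succ := by
      rcases hl1.lt_or_eq with hl1 | rfl
      · obtain ⟨i, hil, hli⟩ :=
          Fin.exists_castSucc_le_and_lt_succ r (hr0 ▸ hl0) (hr1 ▸ hl1)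
        exact ⟨i, hγ i l hil hli, hli.le⟩
      · exact ⟨Fin.last n, hγ1, by rw [Fin.succ_last, hr1]⟩
    rw [hγl]
    exact (monotone_VaR_add_one_sub_mul μ (a i) X Y hY0 hli).trans
      (le_iSup (fun i => VaR μ (a i) (fun ω => X ω + (1 - r i.succ) * Y ω)) i)
  · refine iSup_le fun i =>
      VaR_add_one_sub_mul_le_of_forall_Ioo μ _ X Y (hr Fin.castSucc_lt_succ) fun l hl => ?_
    have hl01 : l ∈ Set.Icc (0 : ℝ) 1 :=
      ⟨hr0 ▸ (hr.monotone (Fin.zero_le _)).trans hl.1.le,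
        hr1 ▸ hl.2.le.trans (hr.monotone (Fin.le_last _))⟩
    rw [← hγ i l hl.1.le hl.2]
    exact le_iSup (fun l : Set.Icc (0 : ℝ) 1 => VaR μ (γ l) (fun ω => X ω + (1 - l) * Y ω))
      ⟨l, hl01⟩

/-- if `γ` is piecewise constant with values `a 0 < ... < a n` (i.e.
`α₁ < ... < α_{n+1}`) on the intervals `[r_{i-1}, r_i)` determined by
`0 = r 0 < r 1 < ... < r (n+1) = 1` (last interval closed at `1`), then for `Y ≥ 0` a.s.,
`RecVaR_γ(X,Y) = max_{i} VaR_{α_i}(X + (1 - r_i) Y)`. -/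
theorem recVaR_piecewise_constant (μ : Measure Ω) [IsProbabilityMeasure μ]
    (n : ℕ) (r : Fin (n + 2) → ℝ) (a : Fin (n + 1) → ℝ)
    (hr : StrictMono r) (hr0 : r 0 = 0) (hr1 : r (Fin.last (n + 1)) = 1)
    (ha : StrictMono a) (ha0 : 0 < a 0) (ha1 : a (Fin.last n) < 1)
    (γ : ℝ → ℝ)
    (hγ : ∀ (i : Fin (n + 1)) (l : ℝ), r i.castSucc ≤ l → l < r i.succ → γ l = a i)
    (hγ1 : γ 1 = a (Fin.last n))
    (X Y : Ω → ℝ) (hX : Measurable X) (hY : Measurable Y)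
    (hY0 : ∀ᵐ ω ∂μ, 0 ≤ Y ω) :
    RecVaR μ γ X Y =
      ⨆ i : Fin (n + 1), VaR μ (a i) (fun ω => X ω + (1 - r i.succ) * Y ω) :=
  recVaR_piecewise_constant_general μ n r a hr hr0 hr1 γ hγ hγ1 X Y hY0
end

section
/- RecVaR_γ is star-shaped in the first component: for all random variables X, Y with Y ≥ 0 almost surely and all a ≥ 1, RecVaR_γ(aX, Y) ≥ a·RecVaR_γ(X,Y). -/
/-! Since `a ≥ 1` and `(1 - λ) Y ≥ 0`, we have `a X + (1 - λ) Y ≤ a (X + (1 - λ) Y)` a.s., so by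
antitonicity and positive homogeneity of VaR each term of the supremum defining
`RecVaR_γ(a X, Y)` dominates `a · VaR_{γ(λ)}(X + (1 - λ) Y)`; multiplication by `a > 0` commutes
with suprema in `EReal`. -/

open MeasureTheory

variable {Ω : Type*} [MeasurableSpace Ω]

namespace EReal

variable {a : EReal}

theorem galoisConnection_mul_div (ha : 0 < a) (ha' : a ≠ ⊤) :
    GaloisConnection (a * ·) (· / a) := fun _ _ => by
  rw [le_div_iff_mul_le ha ha', mul_comm]

theorem galoisConnection_div_mul (ha : 0 < a) (ha' : a ≠ ⊤) :
    GaloisConnection (· / a) (a * ·) := fun _ _ => div_le_iff_le_mul ha ha'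

end EReal

theorem setOf_const_mul_add_neg {β : Type*} {f : β → ℝ} {a : ℝ} (ha : 0 < a) (x : ℝ) :
    {b | a * f b + a * x < 0} = {b | f b + x < 0} := by
  ext b
  rw [Set.mem_ofPred_eq, Set.mem_ofPred_eq, ← mul_add]
  exact ⟨fun h => neg_of_mul_neg_right h ha.le, mul_neg_of_pos_of_neg ha⟩

section VaR

variable {μ : Measure Ω} {α : ℝ} {Z W : Ω → ℝ}

theorem VaR_anti_of_ae_le (h : Z ≤ᵐ[μ] W) : VaR μ α W ≤ VaR μ α Z := by
  refine sInf_le_sInf ?_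
  rintro _ ⟨x, rfl, hx⟩
  refine ⟨x, rfl, le_trans (measure_mono_ae ?_) hx⟩
  filter_upwards [h] with ω hω hlt
  exact lt_of_le_of_lt (by gcongr) hlt

theorem VaR_const_mul {a : ℝ} (ha : 0 < a) :
    VaR μ α (fun ω => a * Z ω) = a * VaR μ α Z := by
  have ha' : (0 : EReal) < a := by exact_mod_cast ha
  rw [VaR, VaR, (EReal.galoisConnection_div_mul ha' (EReal.coe_ne_top a)).u_sInf, ← sInf_image]
  congr 1
  ext y
  constructor
  · rintro ⟨x, rfl, hx⟩
    have hx' : a * (x / a) = x := mul_div_cancel₀ x ha.ne'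
    refine ⟨(x / a : ℝ), ⟨x / a, rfl, ?_⟩, by rw [← EReal.coe_mul, hx']⟩
    rwa [← hx', setOf_const_mul_add_neg ha] at hx
  · rintro ⟨_, ⟨x, rfl, hx⟩, rfl⟩
    exact ⟨a * x, by norm_cast, by rwa [setOf_const_mul_add_neg ha]⟩

end VaR

theorem recVaR_star_shaped_general (μ : Measure Ω)
    (γ : ℝ → ℝ)
    (X Y : Ω → ℝ) (hY0 : ∀ᵐ ω ∂μ, 0 ≤ Y ω) (a : ℝ) (ha : 1 ≤ a) :
    (a : EReal) * RecVaR μ γ X Y ≤ RecVaR μ γ (fun ω => a * X ω) Y := by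
  have ha0 : 0 < a := zero_lt_one.trans_le ha
  rw [RecVaR, RecVaR,
    (EReal.galoisConnection_mul_div (by exact_mod_cast ha0) (EReal.coe_ne_top a)).l_iSup]
  refine iSup_mono fun l => ?_
  rw [← VaR_const_mul ha0]
  refine VaR_anti_of_ae_le (hY0.mono fun ω hY => ?_)
  have hl : 0 ≤ 1 - (l : ℝ) := sub_nonneg.mpr l.2.2
  nlinarith [mul_nonneg hl hY]

/-- `RecVaR_γ` is star-shaped in the first component: for `Y ≥ 0` a.s.
and `a ≥ 1`, `RecVaR_γ(aX, Y) ≥ a · RecVaR_γ(X, Y)`. -/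
theorem recVaR_star_shaped (μ : Measure Ω) [IsProbabilityMeasure μ]
    (γ : ℝ → ℝ) (hγ : ∀ l ∈ Set.Icc (0:ℝ) 1, γ l ∈ Set.Ioo (0:ℝ) 1)
    (hγmono : MonotoneOn γ (Set.Icc (0:ℝ) 1))
    (X Y : Ω → ℝ) (hY0 : ∀ᵐ ω ∂μ, 0 ≤ Y ω) (a : ℝ) (ha : 1 ≤ a) :
    (a : EReal) * RecVaR μ γ X Y ≤ RecVaR μ γ (fun ω => a * X ω) Y :=
  recVaR_star_shaped_general μ γ X Y hY0 a ha
end
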